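/- arXiv:1505.01996 — 5 statements merged into one kernel-verified Lean document; each statement's English description precedes it below -/
import Mathlib

section
/- For any n ≥ 1 and s ≥ 0, an interval [(P, w^1,...,w^s), (P'', w''^1,...,w''^s)] in the poset Π_{n,s+1} with (P,w^1,...,w^s) ≠ 0̂ is order-isomorphic to the interval [P, P''] in the partition lattice Π_n, via the map sending (P', w'^1,...,w'^s) to P'. -/
/-!
Above a fixed vector partition `x`, a vector partition `z` is determined by its underlying
partition: each label `z.w i B` contains the union of the labels `x.w i C` over the parts
`C ⊆ B` of `x.P`, and both sets have cardinality `#B`, so they are equal. Conversely, every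
partition `Q ≥ x.P` carries these union labels. Hence `z ↦ z.P` is an order isomorphism from
`[x, y]` onto `[x.P, y.P]`; the least element `0̂` of `WithBot (VPart n s)` lies below `x`
and so plays no role.
-/

open Finset

/-- A vector partition of `[n]` into `s+1` components: a partition `P` of `[n]`
together with `s` labelings of its parts. -/
structure VPart (n s : ℕ) where
  P : Finpartition (Finset.univ : Finset (Fin n))
  w : Fin s → Finset (Fin n) → Finset (Fin n)
  card_w : ∀ i : Fin s, ∀ B ∈ P.parts, (w i B).card = B.card
  part_w : ∀ i : Fin s, ∀ x : Fin n, ∃! B, B ∈ P.parts ∧ x ∈ w i B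
  w_junk : ∀ i B, B ∉ P.parts → w i B = ∅

namespace VPart

variable {n s : ℕ}

@[ext] theorem ext' {x y : VPart n s} (hP : x.P = y.P) (hw : x.w = y.w) : x = y := by
  cases x; cases y; simp_all

/-- componentwise union-refinement order -/
instance : PartialOrder (VPart n s) where
  le x y := x.P ≤ y.P ∧
    ∀ i : Fin s, ∀ B ∈ x.P.parts, ∀ B' ∈ y.P.parts, B ⊆ B' → x.w i B ⊆ y.w i B'
  le_refl x := by
    refine ⟨le_refl _, fun i B hB B' hB' hBB' => ?_⟩
    obtain rfl : B = B' := by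
      obtain ⟨a, ha⟩ := x.P.nonempty_of_mem_parts hB
      exact x.P.eq_of_mem_parts hB hB' ha (hBB' ha)
    exact subset_rfl
  le_trans x y z hxy hyz := by
    refine ⟨le_trans hxy.1 hyz.1, fun i B hB B'' hB'' hBB'' => ?_⟩
    obtain ⟨B', hB', hBB'⟩ := hxy.1 hB
    obtain ⟨B''', hB''', hB'B'''⟩ := hyz.1 hB'
    obtain ⟨a, ha⟩ := x.P.nonempty_of_mem_parts hB
    obtain rfl : B''' = B'' :=
      z.P.eq_of_mem_parts hB''' hB'' (hB'B''' (hBB' ha)) (hBB'' ha)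
    exact subset_trans (hxy.2 i B hB B' hB' hBB') (hyz.2 i B' hB' B''' hB''' hB'B''')
  le_antisymm x y hxy hyx := by
    have hP : x.P = y.P := le_antisymm hxy.1 hyx.1
    refine ext' hP ?_
    funext i B
    by_cases hB : B ∈ x.P.parts
    · exact subset_antisymm (hxy.2 i B hB B (hP ▸ hB) subset_rfl)
        (hyx.2 i B (hP ▸ hB) B hB subset_rfl)
    · rw [x.w_junk i B hB, y.w_junk i B (hP ▸ hB)]

/-- the part of the underlying partition containing `k` -/
def partOf (x : VPart n s) (k : Fin n) : Finset (Fin n) := x.P.part k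

/-- the atom word of `x`: `atomWord x i k` is the element of the `i`-th label of the
part containing `k` whose rank in that label matches the rank of `k` in its part. -/
def atomWord (x : VPart n s) (i : Fin s) (k : Fin n) : Fin n :=
  (((x.w i (x.partOf k)).sort (· ≤ ·)).getD (((x.partOf k).filter (· < k)).card)) k

/-- `x` is an atom: all parts of the underlying partition are singletons. -/
def IsAtomic (x : VPart n s) : Prop := ∀ B ∈ x.P.parts, B.card = 1

/-- strict lexicographic order on atom words, with `i` as the major index
and `k` the minor index. -/
def wordLt (A B : Fin s → Fin n → Fin n) : Prop :=
  ∃ i k, A i k < B i k ∧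
    ∀ i' k', (i' < i ∨ (i' = i ∧ k' < k)) → A i' k' = B i' k'

def wordLe (A B : Fin s → Fin n → Fin n) : Prop := wordLt A B ∨ A = B

end VPart

namespace Finpartition

variable {α : Type*} [DecidableEq α] {s : Finset α} {P Q : Finpartition s}

lemma biUnion_filter_subset_of_le (hPQ : P ≤ Q) {B : Finset α} (hB : B ∈ Q.parts) :
    (P.parts.filter (· ⊆ B)).biUnion id = B := by
  ext a
  simp only [Finset.mem_biUnion, Finset.mem_filter, id]
  refine ⟨fun ⟨C, ⟨_, hCB⟩, haC⟩ => hCB haC, fun ha => ?_⟩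
  obtain ⟨C, hC, haC⟩ := P.exists_mem (Q.subset hB ha)
  obtain ⟨B', hB', hCB'⟩ := hPQ hC
  obtain rfl : B' = B := Q.eq_of_mem_parts hB' hB (hCB' haC) ha
  exact ⟨C, ⟨hC, hCB'⟩, haC⟩

end Finpartition

namespace WithBot

variable {α : Type*} [Preorder α]

def iccCoeOrderIso (a b : α) : Set.Icc (a : WithBot α) b ≃o Set.Icc a b where
  toFun z := ⟨z.1.unbot ((bot_lt_coe a).trans_le z.2.1).ne',
    (le_unbot_iff _).2 z.2.1, (unbot_le_iff _).2 z.2.2⟩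
  invFun c := ⟨c.1, coe_le_coe.2 c.2.1, coe_le_coe.2 c.2.2⟩
  left_inv _ := Subtype.ext (coe_unbot _ _)
  right_inv _ := Subtype.ext (unbot_coe _)
  map_rel_iff' := unbot_le_unbot_iff _ _

lemma coe_iccCoeOrderIso_apply (a b : α) (z : Set.Icc (a : WithBot α) b) :
    ((iccCoeOrderIso a b z : α) : WithBot α) = z :=
  coe_unbot z.1 _

end WithBot

namespace VPart

variable {n s : ℕ}

lemma disjoint_w (x : VPart n s) (i : Fin s) {C C' : Finset (Fin n)}
    (hC : C ∈ x.P.parts) (hC' : C' ∈ x.P.parts) (hne : C ≠ C') :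
    Disjoint (x.w i C) (x.w i C') := by
  rw [Finset.disjoint_left]
  intro a haC haC'
  obtain ⟨B, -, hu⟩ := x.part_w i a
  exact hne ((hu C ⟨hC, haC⟩).trans (hu C' ⟨hC', haC'⟩).symm)

lemma card_biUnion_w_filter_subset (x : VPart n s) (i : Fin s)
    {Q : Finpartition (Finset.univ : Finset (Fin n))} (hQ : x.P ≤ Q)
    {B : Finset (Fin n)} (hB : B ∈ Q.parts) :
    ((x.P.parts.filter (· ⊆ B)).biUnion (x.w i)).card = B.card := by
  have hw : ∀ C ∈ x.P.parts.filter (· ⊆ B), (x.w i C).card = (id C).card :=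
    fun C hC => x.card_w i C (Finset.mem_filter.1 hC).1
  conv_rhs => rw [← Finpartition.biUnion_filter_subset_of_le hQ hB]
  rw [Finset.card_biUnion fun C hC C' hC' hne =>
      x.disjoint_w i (Finset.mem_filter.1 hC).1 (Finset.mem_filter.1 hC').1 hne,
    Finset.card_biUnion fun C hC C' hC' hne =>
      x.P.disjoint (Finset.mem_filter.1 hC).1 (Finset.mem_filter.1 hC').1 hne]
  exact Finset.sum_congr rfl hw

def coarsen (x : VPart n s) (Q : Finpartition (Finset.univ : Finset (Fin n)))
    (hQ : x.P ≤ Q) : VPart n s where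
  P := Q
  w i B := if B ∈ Q.parts then (x.P.parts.filter (· ⊆ B)).biUnion (x.w i) else ∅
  card_w i B hB := by
    rw [if_pos hB]
    exact x.card_biUnion_w_filter_subset i hQ hB
  part_w i a := by
    obtain ⟨C, ⟨hC, haC⟩, hu⟩ := x.part_w i a
    obtain ⟨B, hB, hCB⟩ := hQ hC
    refine ⟨B, ⟨hB, ?_⟩, ?_⟩
    · rw [if_pos hB]
      exact Finset.mem_biUnion.2 ⟨C, Finset.mem_filter.2 ⟨hC, hCB⟩, haC⟩
    · rintro B' ⟨hB', haB'⟩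
      rw [if_pos hB'] at haB'
      obtain ⟨C', hC', haC'⟩ := Finset.mem_biUnion.1 haB'
      obtain ⟨hC'x, hC'B'⟩ := Finset.mem_filter.1 hC'
      obtain rfl : C' = C := hu C' ⟨hC'x, haC'⟩
      obtain ⟨b, hb⟩ := x.P.nonempty_of_mem_parts hC
      exact Q.eq_of_mem_parts hB' hB (hC'B' hb) (hCB hb)
  w_junk i B hB := if_neg hB

lemma coarsen_w_of_mem (x : VPart n s) {Q} (hQ : x.P ≤ Q) (i : Fin s)
    {B : Finset (Fin n)} (hB : B ∈ Q.parts) :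
    (x.coarsen Q hQ).w i B = (x.P.parts.filter (· ⊆ B)).biUnion (x.w i) :=
  if_pos hB

lemma le_coarsen (x : VPart n s) {Q} (hQ : x.P ≤ Q) : x ≤ x.coarsen Q hQ := by
  refine ⟨hQ, fun i B hB B' hB' hBB' => ?_⟩
  rw [coarsen_w_of_mem x hQ i hB']
  exact Finset.subset_biUnion_of_mem (x.w i) (Finset.mem_filter.2 ⟨hB, hBB'⟩)

lemma coarsen_mono (x : VPart n s) {Q Q'} (hQ : x.P ≤ Q) (hQ' : x.P ≤ Q') (h : Q ≤ Q') :
    x.coarsen Q hQ ≤ x.coarsen Q' hQ' := by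
  refine ⟨h, fun i B hB B' hB' hBB' => ?_⟩
  rw [coarsen_w_of_mem x hQ i hB, coarsen_w_of_mem x hQ' i hB']
  refine Finset.biUnion_subset_biUnion_of_subset_left _ fun C hC => ?_
  obtain ⟨hCx, hCB⟩ := Finset.mem_filter.1 hC
  exact Finset.mem_filter.2 ⟨hCx, hCB.trans hBB'⟩

lemma coarsen_P_eq_of_le {x z : VPart n s} (hxz : x ≤ z) : x.coarsen z.P hxz.1 = z := by
  refine ext' rfl (funext fun i => funext fun B => ?_)
  by_cases hB : B ∈ z.P.parts
  · rw [coarsen_w_of_mem x hxz.1 i hB]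
    refine Finset.eq_of_subset_of_card_le (Finset.biUnion_subset.2 fun C hC => ?_) ?_
    · exact hxz.2 i C (Finset.mem_filter.1 hC).1 B hB (Finset.mem_filter.1 hC).2
    · rw [z.card_w i B hB, x.card_biUnion_w_filter_subset i hxz.1 hB]
  · exact (x.coarsen z.P hxz.1).w_junk i B hB |>.trans (z.w_junk i B hB).symm

lemma le_iff_P_le_of_le {x z z' : VPart n s} (hxz : x ≤ z) (hxz' : x ≤ z') :
    z ≤ z' ↔ z.P ≤ z'.P := by
  refine ⟨fun h => h.1, fun h => ?_⟩
  rw [← coarsen_P_eq_of_le hxz, ← coarsen_P_eq_of_le hxz']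
  exact x.coarsen_mono hxz.1 hxz'.1 h

def iccOrderIsoP {x y : VPart n s} (hxy : x ≤ y) : Set.Icc x y ≃o Set.Icc x.P y.P where
  toFun z := ⟨z.1.P, z.2.1.1, z.2.2.1⟩
  invFun Q := ⟨x.coarsen Q.1 Q.2.1, le_coarsen x Q.2.1,
    (x.coarsen_mono Q.2.1 hxy.1 Q.2.2).trans_eq (coarsen_P_eq_of_le hxy)⟩
  left_inv z := Subtype.ext (coarsen_P_eq_of_le z.2.1)
  right_inv _ := rfl
  map_rel_iff' {z z'} := (le_iff_P_le_of_le z.2.1 z'.2.1).symm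

end VPart

open VPart in
/-- any interval `[x, y]` of `Π_{n,s+1}` with `x ≠ ̄0` is order
isomorphic to the interval `[x.P, y.P]` of the partition lattice `Π_n`, via the map
sending a vector partition to its underlying partition. -/
theorem statement1 (n s : ℕ) (x y : VPart n s) (hxy : x ≤ y) :
    ∃ e : Set.Icc (x : WithBot (VPart n s)) (y : WithBot (VPart n s)) ≃o
        Set.Icc x.P y.P,
      ∀ (z : Set.Icc (x : WithBot (VPart n s)) (y : WithBot (VPart n s)))
        (v : VPart n s), (z : WithBot (VPart n s)) = v ->
          (e z : Finpartition (Finset.univ : Finset (Fin n))) = v.P := by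
  refine ⟨(WithBot.iccCoeOrderIso x y).trans (iccOrderIsoP hxy), fun z v hzv => ?_⟩
  have hv : (WithBot.iccCoeOrderIso x y z : VPart n s) = v :=
    WithBot.coe_injective ((WithBot.coe_iccCoeOrderIso_apply x y z).trans hzv)
  rw [OrderIso.trans_apply, ← hv]
  rfl
end

section
/- The edge labeling χ of the partition lattice Π_n defined by χ(x ⋖ y) = max(B₁ ∪ B₂), where y is obtained from x by merging the two parts B₁ and B₂, is an EL-labeling: every interval of Π_n has a unique maximal chain with strictly increasing label word, and this chain lexicographically precedes all other maximal chains in the interval. -/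
/-!
Merging the parts `B₁, B₂` of a partition gets the label `max (B₁ ∪ B₂)`. Hence the least label of
an atom of `[x, y]` is the least `m` such that some part of `y` contains a part `C` of `x` with
maximum `m` and another part `C'` of `x` with a smaller maximum; this pair is unique, since a second
one would give a smaller label. After merging `C'` with `C`, every pair still to be merged below `y`
has a strictly larger label, so the greedy chain, which always merges the least pair, is increasing.
Any other first step `z` has a larger label and leaves `C'` and `C` in different parts of `z`, so
the next label is at most the first one: no increasing chain starts with `z`. Induction along the
chain gives uniqueness and lexicographic minimality.
-/

/-- the word of edge labels along a list, for an edge labeling `f` -/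
def labelWord {A B : Type*} (f : A -> A -> B) : List A -> List B
  | a :: b :: l => f a b :: labelWord f (b :: l)
  | _ => []

/-- `L` is a saturated (covering) chain from `x` to `y`; these are exactly the
maximal chains of the interval `[x,y]`. -/
def CoverChain {A : Type*} [PartialOrder A] (x y : A) (L : List A) : Prop :=
  L.head? = some x ∧ L.getLast? = some y ∧ L.Chain' (fun a b => a ⋖ b)

/-- The Wachs labeling of the partition lattice: the label of a cover `x ⋖ y`,
where `y` is obtained from `x` by merging parts `B₁` and `B₂`, is
`max (B₁ ∪ B₂)` (1-based). -/
def chi {n : ℕ} (x y : Finpartition (Finset.univ : Finset (Fin n))) : ℕ :=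
  (y.parts \ x.parts).sup fun B => B.sup fun a => (a : ℕ) + 1

open Finset

section CoverChain

variable {A : Type*} [PartialOrder A] {x y z : A} {t L : List A}

theorem coverChain_iff :
    CoverChain x y L ↔ L.head? = some x ∧ L.getLast? = some y ∧ L.IsChain (· ⋖ ·) :=
  Iff.rfl

theorem coverChain_singleton_iff {a : A} : CoverChain x y [a] ↔ a = x ∧ a = y := by
  simp [coverChain_iff]

theorem coverChain_cons_cons_iff {a : A} :
    CoverChain x y (a :: z :: t) ↔ a = x ∧ x ⋖ z ∧ CoverChain z y (z :: t) := by
  simp only [coverChain_iff, List.head?_cons, Option.some.injEq, List.getLast?_cons_cons,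
    List.isChain_cons_cons, true_and]
  constructor
  · rintro ⟨rfl, hy, hxz, hc⟩
    exact ⟨rfl, hxz, hy, hc⟩
  · rintro ⟨rfl, hxz, hy, hc⟩
    exact ⟨rfl, hy, hxz, hc⟩

theorem CoverChain.cons (hxz : x ⋖ z) (h : CoverChain z y (z :: t)) :
    CoverChain x y (x :: z :: t) :=
  coverChain_cons_cons_iff.2 ⟨rfl, hxz, h⟩

@[elab_as_elim]
theorem CoverChain.induction_on {motive : ∀ x L, CoverChain x y L → Prop}
    (single : motive y [y] (coverChain_singleton_iff.2 ⟨rfl, rfl⟩))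
    (cons : ∀ ⦃x z t⦄ (hxz : x ⋖ z) (h : CoverChain z y (z :: t)), motive z (z :: t) h →
      motive x (x :: z :: t) (h.cons hxz))
    (h : CoverChain x y L) : motive x L h := by
  induction L generalizing x with
  | nil => simp [coverChain_iff] at h
  | cons a t ih =>
    rcases t with _ | ⟨z, t⟩
    · obtain ⟨rfl, rfl⟩ := coverChain_singleton_iff.1 h
      exact single
    · obtain ⟨rfl, hxz, hzy⟩ := coverChain_cons_cons_iff.1 h
      exact cons hxz hzy (ih hzy)

theorem CoverChain.le (h : CoverChain x y L) : x ≤ y := by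
  induction h using CoverChain.induction_on with
  | single => exact le_rfl
  | cons hxz _ ih => exact hxz.le.trans ih

theorem CoverChain.eq_singleton (h : CoverChain x x L) : L = [x] := by
  rcases L with _ | ⟨a, _ | ⟨z, t⟩⟩
  · simp [coverChain_iff] at h
  · rw [(coverChain_singleton_iff.1 h).1]
  · obtain ⟨-, hxz, hzx⟩ := coverChain_cons_cons_iff.1 h
    exact absurd hzx.le hxz.lt.not_ge

theorem CoverChain.exists_eq_cons_cons (h : CoverChain x y L) (hxy : x ≠ y) :
    ∃ z t, L = x :: z :: t ∧ x ⋖ z ∧ CoverChain z y (z :: t) := by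
  rcases L with _ | ⟨a, _ | ⟨z, t⟩⟩
  · simp [coverChain_iff] at h
  · exact absurd (coverChain_singleton_iff.1 h) fun h => hxy (h.1.symm.trans h.2)
  · obtain ⟨rfl, hxz, hzy⟩ := coverChain_cons_cons_iff.1 h
    exact ⟨z, t, rfl, hxz, hzy⟩

end CoverChain

theorem labelWord_cons_cons {A B : Type*} (lab : A → A → B) (a b : A) (t : List A) :
    labelWord lab (a :: b :: t) = lab a b :: labelWord lab (b :: t) := rfl

section EdgeLabeling

variable {A B : Type*} [PartialOrder A] [LinearOrder B]

/-- `m x y` is the least label of an atom of `[x, y]`, carried by a single atom, and an atom `z < y`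
has label below `m z y` exactly when it is that one. Then the chain that always steps to the
least-labelled atom is the unique increasing one, and it comes lexicographically first. -/
structure MinAtomLabel (lab m : A → A → B) : Prop where
  exists_covBy : ∀ ⦃x y⦄, x < y → ∃ z, x ⋖ z ∧ z ≤ y ∧ lab x z = m x y
  le_label : ∀ ⦃x y z⦄, x ⋖ z → z ≤ y → m x y ≤ lab x z
  eq_of_label_eq : ∀ ⦃x y z z'⦄, x ⋖ z → z ≤ y → x ⋖ z' → z' ≤ y →
    lab x z = m x y → lab x z' = m x y → z = z'
  label_lt_iff : ∀ ⦃x y z⦄, x ⋖ z → z < y → (lab x z < m z y ↔ lab x z = m x y)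

namespace MinAtomLabel

variable {lab m : A → A → B} {x y : A} {L M : List A}

theorem head?_labelWord (hm : MinAtomLabel lab m) (hL : CoverChain x y L)
    (hinc : (labelWord lab L).IsChain (· < ·)) (hxy : x ≠ y) :
    (labelWord lab L).head? = some (m x y) := by
  induction hL using CoverChain.induction_on with
  | single => exact absurd rfl hxy
  | @cons x z t hxz hzy ih =>
    rw [labelWord_cons_cons, List.isChain_cons] at hinc
    rw [labelWord_cons_cons, List.head?_cons, Option.some.injEq]
    rcases hzy.le.lt_or_eq with hzy' | rfl
    · exact (hm.label_lt_iff hxz hzy').1 (hinc.1 _ (ih hinc.2 hzy'.ne))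
    · obtain ⟨w, hxw, hwz, hw⟩ := hm.exists_covBy hxz.lt
      rwa [hwz.eq_of_not_lt (hxz.2 hxw.lt)] at hw

theorem eq_of_isChain (hm : MinAtomLabel lab m) (hL : CoverChain x y L)
    (hLinc : (labelWord lab L).IsChain (· < ·)) (hM : CoverChain x y M)
    (hMinc : (labelWord lab M).IsChain (· < ·)) : M = L := by
  induction hL using CoverChain.induction_on generalizing M with
  | single => exact hM.eq_singleton
  | @cons x z t hxz hzy ih =>
    have hxy : x ≠ y := (hxz.lt.trans_le hzy.le).ne
    obtain ⟨w, s, rfl, hxw, hwy⟩ := hM.exists_eq_cons_cons hxy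
    have hz := hm.head?_labelWord (hzy.cons hxz) hLinc hxy
    have hw := hm.head?_labelWord hM hMinc hxy
    rw [labelWord_cons_cons, List.head?_cons, Option.some.injEq] at hz hw
    obtain rfl := hm.eq_of_label_eq hxw hwy.le hxz hzy.le hw hz
    rw [labelWord_cons_cons] at hLinc hMinc
    rw [ih hLinc.tail hwy hMinc.tail]

theorem lex_of_isChain (hm : MinAtomLabel lab m) (hL : CoverChain x y L)
    (hLinc : (labelWord lab L).IsChain (· < ·)) (hM : CoverChain x y M) (hML : M ≠ L) :
    List.Lex (· < ·) (labelWord lab L) (labelWord lab M) := by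
  induction hL using CoverChain.induction_on generalizing M with
  | single => exact absurd hM.eq_singleton hML
  | @cons x z t hxz hzy ih =>
    have hxy : x ≠ y := (hxz.lt.trans_le hzy.le).ne
    obtain ⟨w, s, rfl, hxw, hwy⟩ := hM.exists_eq_cons_cons hxy
    have hz := hm.head?_labelWord (hzy.cons hxz) hLinc hxy
    rw [labelWord_cons_cons, List.head?_cons, Option.some.injEq] at hz
    simp only [labelWord_cons_cons] at hLinc ⊢
    rcases (hz ▸ hm.le_label hxw hwy.le).lt_or_eq with hlt | heq
    · exact .rel hlt
    · obtain rfl := hm.eq_of_label_eq hxw hwy.le hxz hzy.le (heq.symm.trans hz) hz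
      exact .cons (ih hLinc.tail hwy fun h => hML (by rw [h]))

theorem exists_coverChain_isChain [WellFoundedGT A] (hm : MinAtomLabel lab m) (hxy : x ≤ y) :
    ∃ L, CoverChain x y L ∧ (labelWord lab L).IsChain (· < ·) := by
  induction x using WellFoundedGT.induction with
  | _ x ih =>
    rcases hxy.lt_or_eq with hxy | rfl
    · obtain ⟨z, hxz, hzy, hz⟩ := hm.exists_covBy hxy
      obtain ⟨L, hL, hLinc⟩ := ih z hxz.lt hzy
      rcases L with _ | ⟨a, t⟩
      · simp [coverChain_iff] at hL
      obtain rfl : a = z := Option.some_injective _ hL.1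
      refine ⟨x :: a :: t, hL.cons hxz, ?_⟩
      rw [labelWord_cons_cons, List.isChain_cons]
      refine ⟨fun b hb => ?_, hLinc⟩
      rcases hzy.lt_or_eq with hzy | rfl
      · rw [hm.head?_labelWord hL hLinc hzy.ne, Option.mem_some_iff] at hb
        exact hb ▸ (hm.label_lt_iff hxz hzy).2 hz
      · simp [hL.eq_singleton, labelWord] at hb
    · exact ⟨[x], coverChain_singleton_iff.2 ⟨rfl, rfl⟩, List.isChain_nil⟩

theorem exists_unique_isChain_lex [WellFoundedGT A] (hm : MinAtomLabel lab m)
    (hxy : x ≤ y) :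
    ∃ L, CoverChain x y L ∧ (labelWord lab L).IsChain (· < ·) ∧
      (∀ M, CoverChain x y M → (labelWord lab M).IsChain (· < ·) → M = L) ∧
      (∀ M, CoverChain x y M → M ≠ L →
        List.Lex (· < ·) (labelWord lab L) (labelWord lab M)) := by
  obtain ⟨L, hL, hLinc⟩ := hm.exists_coverChain_isChain hxy
  exact ⟨L, hL, hLinc, fun M hM hMinc => hm.eq_of_isChain hL hLinc hM hMinc,
    fun M hM hML => hm.lex_of_isChain hL hLinc hM hML⟩

end MinAtomLabel

end EdgeLabeling

namespace Finpartition

variable {α : Type*} [DecidableEq α] {s : Finset α} {P Q : Finpartition s}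
  {a : α} {B B₁ B₂ C D Y : Finset α}

theorem eq_of_subset (hB : B ∈ P.parts) (hC : C ∈ P.parts) (h : B ⊆ C) : B = C :=
  P.disjoint.eq_of_le hB hC (P.ne_bot hB) h

theorem eq_or_eq_of_subset_union (hC : C ∈ P.parts) (h₁ : B₁ ∈ P.parts) (h₂ : B₂ ∈ P.parts)
    (h : C ⊆ B₁ ∪ B₂) : C = B₁ ∨ C = B₂ := by
  obtain ⟨a, ha⟩ := P.nonempty_of_mem_parts hC
  rcases mem_union.1 (h ha) with h' | h'
  · exact .inl (P.eq_of_mem_parts hC h₁ ha h')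
  · exact .inr (P.eq_of_mem_parts hC h₂ ha h')

theorem union_notMem_parts (h₁ : B₁ ∈ P.parts) (h₂ : B₂ ∈ P.parts) (hne : B₁ ≠ B₂) :
    B₁ ∪ B₂ ∉ P.parts := fun hU => by
  rcases eq_or_eq_of_subset_union hU h₁ h₂ subset_rfl with h | h
  · exact hne.symm (eq_of_subset h₂ h₁ (h ▸ subset_union_right))
  · exact hne (eq_of_subset h₁ h₂ (h ▸ subset_union_left))

def merge (P : Finpartition s) (h₁ : B₁ ∈ P.parts) (h₂ : B₂ ∈ P.parts) (hne : B₁ ≠ B₂) :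
    Finpartition s where
  parts := insert (B₁ ∪ B₂) ((P.parts.erase B₁).erase B₂)
  supIndep := by
    rw [supIndep_iff_pairwiseDisjoint, coe_insert]
    refine Set.PairwiseDisjoint.insert (P.disjoint.subset fun C hC => ?_) fun C hC _ => ?_
    · simp only [coe_erase, Set.mem_sdiff] at hC
      exact hC.1.1
    · simp only [mem_coe, mem_erase] at hC
      obtain ⟨hC₂, hC₁, hC⟩ := hC
      exact disjoint_union_left.2
        ⟨P.disjoint h₁ hC (Ne.symm hC₁), P.disjoint h₂ hC (Ne.symm hC₂)⟩
  sup_parts := by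
    have hP : insert B₁ (insert B₂ ((P.parts.erase B₁).erase B₂)) = P.parts := by
      rw [insert_erase (mem_erase.2 ⟨hne.symm, h₂⟩), insert_erase h₁]
    have := P.sup_parts
    rw [← hP, sup_insert, sup_insert] at this
    rw [sup_insert]
    exact (sup_assoc _ _ _).trans this
  bot_notMem := by
    simp only [bot_eq_empty, mem_insert, mem_erase]
    rintro (h | ⟨-, -, h⟩)
    · exact (P.nonempty_of_mem_parts h₁).ne_empty (subset_empty.1 (h ▸ subset_union_left))
    · exact P.bot_notMem h

variable {h₁ : B₁ ∈ P.parts} {h₂ : B₂ ∈ P.parts} {hne : B₁ ≠ B₂}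

theorem mem_merge :
    C ∈ (P.merge h₁ h₂ hne).parts ↔ C = B₁ ∪ B₂ ∨ C ∈ P.parts ∧ C ≠ B₁ ∧ C ≠ B₂ := by
  simp only [merge, mem_insert, mem_erase]
  tauto

theorem union_mem_merge : B₁ ∪ B₂ ∈ (P.merge h₁ h₂ hne).parts :=
  mem_merge.2 (.inl rfl)

theorem merge_comm : P.merge h₁ h₂ hne = P.merge h₂ h₁ hne.symm := by
  ext C
  simp only [mem_merge, union_comm]
  tauto

theorem card_merge : #(P.merge h₁ h₂ hne).parts + 1 = #P.parts := by
  have hB₂ : B₂ ∈ P.parts.erase B₁ := mem_erase.2 ⟨hne.symm, h₂⟩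
  have hU : B₁ ∪ B₂ ∉ (P.parts.erase B₁).erase B₂ := fun h =>
    union_notMem_parts h₁ h₂ hne (mem_of_mem_erase (mem_of_mem_erase h))
  have : 0 < #(P.parts.erase B₁) := card_pos.2 ⟨B₂, hB₂⟩
  rw [merge, card_insert_of_notMem hU, card_erase_of_mem hB₂, card_erase_of_mem h₁] at *
  omega

theorem eq_or_eq_union_of_subset (hB : B ∈ P.parts) (hD : D ∈ (P.merge h₁ h₂ hne).parts)
    (h : B ⊆ D) : D = B ∨ D = B₁ ∪ B₂ := by
  rcases mem_merge.1 hD with hD | ⟨hD, -, -⟩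
  · exact .inr hD
  · exact .inl (eq_of_subset hB hD h).symm

theorem le_merge : P ≤ P.merge h₁ h₂ hne := fun C hC => by
  by_cases hC₁ : C = B₁
  · exact ⟨B₁ ∪ B₂, union_mem_merge, hC₁ ▸ subset_union_left⟩
  by_cases hC₂ : C = B₂
  · exact ⟨B₁ ∪ B₂, union_mem_merge, hC₂ ▸ subset_union_right⟩
  exact ⟨C, mem_merge.2 (.inr ⟨hC, hC₁, hC₂⟩), le_rfl⟩

theorem merge_le (hPQ : P ≤ Q) (hY : Y ∈ Q.parts) (hsub : B₁ ∪ B₂ ⊆ Y) :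
    P.merge h₁ h₂ hne ≤ Q := fun C hC => by
  rcases mem_merge.1 hC with rfl | ⟨hC, -, -⟩
  · exact ⟨Y, hY, hsub⟩
  · exact hPQ hC

theorem subset_of_le_of_mem (hPQ : P ≤ Q) (hB : B ∈ P.parts) (hY : Y ∈ Q.parts) (haB : a ∈ B)
    (haY : a ∈ Y) : B ⊆ Y := by
  obtain ⟨Y', hY', hBY'⟩ := hPQ hB
  rwa [Q.eq_of_mem_parts hY hY' haY (hBY' haB)]

theorem exists_mem_subset_of_le (hPQ : P ≤ Q) (hY : Y ∈ Q.parts) (ha : a ∈ Y) :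
    ∃ B ∈ P.parts, a ∈ B ∧ B ⊆ Y := by
  obtain ⟨B, hB, haB⟩ := P.exists_mem (Q.subset hY ha)
  exact ⟨B, hB, haB, subset_of_le_of_mem hPQ hB hY haB ha⟩

theorem exists_ne_union_subset_of_lt (h : P < Q) :
    ∃ B₁ ∈ P.parts, ∃ B₂ ∈ P.parts, B₁ ≠ B₂ ∧ ∃ Y ∈ Q.parts, B₁ ∪ B₂ ⊆ Y := by
  by_contra hno
  refine h.not_ge fun Y hY => ?_
  obtain ⟨a, ha⟩ := Q.nonempty_of_mem_parts hY
  obtain ⟨B₁, hB₁, -, hB₁Y⟩ := exists_mem_subset_of_le h.le hY ha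
  refine ⟨B₁, hB₁, fun b hb => by_contra fun hbB₁ => ?_⟩
  obtain ⟨B₂, hB₂, hbB₂, hB₂Y⟩ := exists_mem_subset_of_le h.le hY hb
  exact hno ⟨B₁, hB₁, B₂, hB₂, fun e => hbB₁ (e ▸ hbB₂), Y, hY, union_subset hB₁Y hB₂Y⟩

theorem card_parts_lt_of_lt (h : P < Q) : #Q.parts < #P.parts := by
  obtain ⟨B₁, h₁, B₂, h₂, hne, Y, hY, hsub⟩ := exists_ne_union_subset_of_lt h
  have := card_mono (merge_le h.le hY hsub : P.merge h₁ h₂ hne ≤ Q)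
  have : #(P.merge h₁ h₂ hne).parts + 1 = #P.parts := card_merge
  omega

theorem covBy_merge : P ⋖ P.merge h₁ h₂ hne := by
  have hcard : #(P.merge h₁ h₂ hne).parts + 1 = #P.parts := card_merge
  refine ⟨le_merge.lt_of_ne fun h => by rw [← h] at hcard; omega, fun R hPR hRQ => ?_⟩
  have := card_parts_lt_of_lt hPR
  have := card_parts_lt_of_lt hRQ
  omega

theorem exists_eq_merge_of_covBy (h : P ⋖ Q) :
    ∃ B₁ B₂, ∃ (h₁ : B₁ ∈ P.parts) (h₂ : B₂ ∈ P.parts) (hne : B₁ ≠ B₂),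
      Q = P.merge h₁ h₂ hne := by
  obtain ⟨B₁, h₁, B₂, h₂, hne, Y, hY, hsub⟩ := exists_ne_union_subset_of_lt h.lt
  exact ⟨B₁, B₂, h₁, h₂, hne,
    ((merge_le h.le hY hsub).eq_of_not_lt (h.2 covBy_merge.lt)).symm⟩

end Finpartition

section PartitionLattice

open Finpartition

variable {n : ℕ} {x y z z' : Finpartition (univ : Finset (Fin n))}
  {B B' B₁ B₂ C C' D Y : Finset (Fin n)} {h₁ : B₁ ∈ x.parts} {h₂ : B₂ ∈ x.parts} {hne : B₁ ≠ B₂}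

def maxLabel (B : Finset (Fin n)) : ℕ := B.sup fun a => (a : ℕ) + 1

theorem maxLabel_union : maxLabel (B ∪ C) = max (maxLabel B) (maxLabel C) := sup_union

theorem exists_mem_maxLabel_eq (h : B.Nonempty) : ∃ a ∈ B, maxLabel B = a + 1 :=
  exists_mem_eq_sup B h _

theorem eq_of_maxLabel_eq (hB : B ∈ x.parts) (hC : C ∈ x.parts)
    (h : maxLabel B = maxLabel C) : B = C := by
  obtain ⟨a, ha, haB⟩ := exists_mem_maxLabel_eq (x.nonempty_of_mem_parts hB)
  obtain ⟨b, hb, hbC⟩ := exists_mem_maxLabel_eq (x.nonempty_of_mem_parts hC)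
  obtain rfl : a = b := Fin.ext (by omega)
  exact x.eq_of_mem_parts hB hC ha hb

theorem maxLabel_lt_or_gt (hB : B ∈ x.parts) (hC : C ∈ x.parts) (hBC : B ≠ C) :
    maxLabel B < maxLabel C ∨ maxLabel C < maxLabel B :=
  lt_or_gt_of_ne fun h => hBC (eq_of_maxLabel_eq hB hC h)

theorem exists_subset_maxLabel_eq (hxz : x ≤ z) (hD : D ∈ z.parts) :
    ∃ B ∈ x.parts, B ⊆ D ∧ maxLabel B = maxLabel D := by
  obtain ⟨a, ha, hmax⟩ := exists_mem_maxLabel_eq (z.nonempty_of_mem_parts hD)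
  obtain ⟨B, hB, haB, hBD⟩ := exists_mem_subset_of_le hxz hD ha
  refine ⟨B, hB, hBD, le_antisymm (sup_mono hBD) ?_⟩
  rw [hmax]
  exact le_sup (f := fun a : Fin n => (a : ℕ) + 1) haB

theorem chi_merge (hlt : maxLabel B₁ < maxLabel B₂) :
    chi x (x.merge h₁ h₂ hne) = maxLabel B₂ := by
  have hnew : (x.merge h₁ h₂ hne).parts \ x.parts = {B₁ ∪ B₂} := by
    ext C
    simp only [mem_sdiff, mem_singleton, mem_merge]
    constructor
    · rintro ⟨rfl | ⟨hC, -, -⟩, hCx⟩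
      · rfl
      · exact absurd hC hCx
    · rintro rfl
      exact ⟨.inl rfl, union_notMem_parts h₁ h₂ hne⟩
  rw [chi, hnew, sup_singleton]
  exact maxLabel_union.trans (max_eq_right hlt.le)

theorem maxLabel_le_of_subset_merge (hlt : maxLabel B₁ < maxLabel B₂) (hB : B ∈ x.parts)
    (hD : D ∈ (x.merge h₁ h₂ hne).parts) (hBD : B ⊆ D) :
    maxLabel D ≤ max (maxLabel B) (maxLabel B₂) := by
  rcases eq_or_eq_union_of_subset hB hD hBD with rfl | rfl
  · exact le_max_left _ _
  · rw [maxLabel_union, max_eq_right hlt.le]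
    exact le_max_right _ _

theorem exists_eq_merge_maxLabel_lt (h : x ⋖ z) :
    ∃ B₁ B₂, ∃ (h₁ : B₁ ∈ x.parts) (h₂ : B₂ ∈ x.parts) (hne : B₁ ≠ B₂),
      z = x.merge h₁ h₂ hne ∧ maxLabel B₁ < maxLabel B₂ := by
  obtain ⟨B₁, B₂, h₁, h₂, hne, rfl⟩ := exists_eq_merge_of_covBy h
  rcases maxLabel_lt_or_gt h₁ h₂ hne with hlt | hlt
  · exact ⟨B₁, B₂, h₁, h₂, hne, rfl, hlt⟩
  · exact ⟨B₂, B₁, h₂, h₁, hne.symm, merge_comm, hlt⟩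

/-- The labels of the atoms of `[x, y]`, each of which merges two parts of `x` lying in one part
of `y`. -/
def mergeLabels (x y : Finpartition (univ : Finset (Fin n))) : Set ℕ :=
  {k | ∃ B ∈ x.parts, ∃ B' ∈ x.parts, B ≠ B' ∧ (∃ Y ∈ y.parts, B ∪ B' ⊆ Y) ∧
    max (maxLabel B) (maxLabel B') = k}

/-- The junk value `sInf ∅ = 0` occurs only for `x = y`. -/
noncomputable def minMergeLabel (x y : Finpartition (univ : Finset (Fin n))) : ℕ :=
  sInf (mergeLabels x y)

theorem minMergeLabel_le_max (hB : B ∈ x.parts) (hB' : B' ∈ x.parts) (hBB' : B ≠ B')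
    (hY : Y ∈ y.parts) (hsub : B ∪ B' ⊆ Y) :
    minMergeLabel x y ≤ max (maxLabel B) (maxLabel B') :=
  Nat.sInf_le ⟨B, hB, B', hB', hBB', ⟨Y, hY, hsub⟩, rfl⟩

theorem minMergeLabel_le (hB' : B' ∈ x.parts) (hB : B ∈ x.parts) (hY : Y ∈ y.parts)
    (hsub : B' ∪ B ⊆ Y) (hlt : maxLabel B' < maxLabel B) : minMergeLabel x y ≤ maxLabel B :=
  (minMergeLabel_le_max hB' hB (fun h => hlt.ne (h ▸ rfl)) hY hsub).trans_eq (max_eq_right hlt.le)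

/-- Merging `C'` into `C` is an atom of `[x, y]` of least label. -/
structure IsMinPair (x y : Finpartition (univ : Finset (Fin n))) (C' C : Finset (Fin n)) :
    Prop where
  left_mem : C' ∈ x.parts
  right_mem : C ∈ x.parts
  exists_union_subset : ∃ Y ∈ y.parts, C' ∪ C ⊆ Y
  maxLabel_lt : maxLabel C' < maxLabel C
  maxLabel_eq : maxLabel C = minMergeLabel x y

theorem IsMinPair.ne (hm : IsMinPair x y C' C) : C' ≠ C :=
  fun h => hm.maxLabel_lt.ne (h ▸ rfl)

theorem exists_isMinPair (h : x < y) : ∃ C' C, IsMinPair x y C' C := by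
  obtain ⟨B, hB, B', hB', hBB', hY⟩ := exists_ne_union_subset_of_lt h
  obtain ⟨C, hC, C', hC', hCC', ⟨Y, hY, hsub⟩, hmax⟩ : minMergeLabel x y ∈ mergeLabels x y :=
    Nat.sInf_mem ⟨_, B, hB, B', hB', hBB', hY, rfl⟩
  rcases maxLabel_lt_or_gt hC hC' hCC' with hlt | hlt
  · exact ⟨C, C', hC, hC', ⟨Y, hY, hsub⟩, hlt, (max_eq_right hlt.le).symm.trans hmax⟩
  · exact ⟨C', C, hC', hC, ⟨Y, hY, union_comm C C' ▸ hsub⟩, hlt,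
      (max_eq_left hlt.le).symm.trans hmax⟩

theorem IsMinPair.eq (hB : IsMinPair x y B' B) (hC : IsMinPair x y C' C) : B' = C' ∧ B = C := by
  obtain rfl : B = C :=
    eq_of_maxLabel_eq hB.right_mem hC.right_mem (hB.maxLabel_eq.trans hC.maxLabel_eq.symm)
  obtain ⟨Y, hY, hBY⟩ := hB.exists_union_subset
  obtain ⟨Z, hZ, hCZ⟩ := hC.exists_union_subset
  obtain ⟨a, ha⟩ := x.nonempty_of_mem_parts hB.right_mem
  obtain rfl : Y = Z :=
    y.eq_of_mem_parts hY hZ (hBY (mem_union_right _ ha)) (hCZ (mem_union_right _ ha))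
  refine ⟨by_contra fun hne => ?_, rfl⟩
  have := minMergeLabel_le_max hB.left_mem hC.left_mem hne hY
    (union_subset (subset_union_left.trans hBY) (subset_union_left.trans hCZ))
  have := max_lt hB.maxLabel_lt hC.maxLabel_lt
  rw [hB.maxLabel_eq] at this
  omega

theorem minMergeLabel_le_chi (h : x ⋖ z) (hzy : z ≤ y) : minMergeLabel x y ≤ chi x z := by
  obtain ⟨B₁, B₂, h₁, h₂, hne, rfl, hlt⟩ := exists_eq_merge_maxLabel_lt h
  obtain ⟨Y, hY, hsub⟩ := hzy union_mem_merge
  rw [chi_merge hlt]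
  exact minMergeLabel_le h₁ h₂ hY hsub hlt

theorem exists_covBy_chi_eq (h : x < y) :
    ∃ z, x ⋖ z ∧ z ≤ y ∧ chi x z = minMergeLabel x y := by
  obtain ⟨C', C, hm⟩ := exists_isMinPair h
  obtain ⟨Y, hY, hsub⟩ := hm.exists_union_subset
  exact ⟨x.merge hm.left_mem hm.right_mem hm.ne, covBy_merge, merge_le h.le hY hsub,
    (chi_merge hm.maxLabel_lt).trans hm.maxLabel_eq⟩

theorem exists_isMinPair_of_chi_eq (h : x ⋖ z) (hzy : z ≤ y)
    (heq : chi x z = minMergeLabel x y) :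
    ∃ C' C, ∃ hm : IsMinPair x y C' C, z = x.merge hm.left_mem hm.right_mem hm.ne := by
  obtain ⟨B₁, B₂, h₁, h₂, hne, rfl, hlt⟩ := exists_eq_merge_maxLabel_lt h
  obtain ⟨Y, hY, hsub⟩ := hzy union_mem_merge
  exact ⟨B₁, B₂, ⟨h₁, h₂, ⟨Y, hY, hsub⟩, hlt, (chi_merge hlt).symm.trans heq⟩, rfl⟩

theorem eq_of_chi_eq (h : x ⋖ z) (hzy : z ≤ y) (h' : x ⋖ z') (hz'y : z' ≤ y)
    (heq : chi x z = minMergeLabel x y) (heq' : chi x z' = minMergeLabel x y) : z = z' := by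
  obtain ⟨B', B, hB, rfl⟩ := exists_isMinPair_of_chi_eq h hzy heq
  obtain ⟨C', C, hC, rfl⟩ := exists_isMinPair_of_chi_eq h' hz'y heq'
  obtain ⟨rfl, rfl⟩ := hB.eq hC
  rfl

theorem minMergeLabel_le_chi_of_ne (h : x ⋖ z) (hzy : z ≤ y)
    (hne : chi x z ≠ minMergeLabel x y) : minMergeLabel z y ≤ chi x z := by
  have hmu := minMergeLabel_le_chi h hzy
  obtain ⟨C', C, hm⟩ := exists_isMinPair (h.lt.trans_le hzy)
  obtain ⟨Y, hY, hsub⟩ := hm.exists_union_subset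
  obtain ⟨B₁, B₂, h₁, h₂, hne₁₂, rfl, hlt⟩ := exists_eq_merge_maxLabel_lt h
  rw [chi_merge hlt] at hne hmu ⊢
  obtain ⟨D, hD, hCD⟩ := le_merge hm.right_mem
  obtain ⟨D', hD', hC'D'⟩ := le_merge hm.left_mem
  -- `z` does not merge `C'` with `C`, so they lie in different parts of `z`
  have hD'D : D' ≠ D := by
    rintro rfl
    rcases eq_or_eq_union_of_subset hm.right_mem hD hCD with rfl | rfl
    · exact hm.ne (eq_of_subset hm.left_mem hm.right_mem hC'D')
    rcases eq_or_eq_of_subset_union hm.right_mem h₁ h₂ hCD with rfl | rfl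
    · rcases eq_or_eq_of_subset_union hm.left_mem h₁ h₂ hC'D' with rfl | rfl
      · exact hm.ne rfl
      · exact (hm.maxLabel_lt.trans hlt).false
    · exact hne hm.maxLabel_eq
  obtain ⟨a, ha⟩ := x.nonempty_of_mem_parts hm.right_mem
  obtain ⟨a', ha'⟩ := x.nonempty_of_mem_parts hm.left_mem
  have hDY := subset_of_le_of_mem hzy hD hY (hCD ha) (hsub (mem_union_right _ ha))
  have hD'Y := subset_of_le_of_mem hzy hD' hY (hC'D' ha') (hsub (mem_union_left _ ha'))
  have := hm.maxLabel_lt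
  have := hm.maxLabel_eq
  calc minMergeLabel _ y ≤ max (maxLabel D') (maxLabel D) :=
        minMergeLabel_le_max hD' hD hD'D hY (union_subset hD'Y hDY)
    _ ≤ maxLabel B₂ :=
      max_le ((maxLabel_le_of_subset_merge hlt hm.left_mem hD' hC'D').trans (by omega))
        ((maxLabel_le_of_subset_merge hlt hm.right_mem hD hCD).trans (by omega))

theorem minMergeLabel_lt_of_chi_eq (h : x ⋖ z) (hzy : z < y)
    (heq : chi x z = minMergeLabel x y) : minMergeLabel x y < minMergeLabel z y := by
  obtain ⟨C', C, hm, rfl⟩ := exists_isMinPair_of_chi_eq h hzy.le heq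
  obtain ⟨D', D, hmz⟩ := exists_isMinPair hzy
  obtain ⟨Y, hY, hsub⟩ := hmz.exists_union_subset
  obtain ⟨B, hB, hBD, hBl⟩ := exists_subset_maxLabel_eq h.le hmz.right_mem
  obtain ⟨B', hB', hB'D', hB'l⟩ := exists_subset_maxLabel_eq h.le hmz.left_mem
  have hlt : maxLabel B' < maxLabel B := hB'l ▸ hBl ▸ hmz.maxLabel_lt
  have hBY : B' ∪ B ⊆ Y := (union_subset_union hB'D' hBD).trans hsub
  have hle := minMergeLabel_le hB' hB hY hBY hlt
  rw [hBl, hmz.maxLabel_eq] at hle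
  refine hle.lt_of_ne fun heq' => ?_
  -- otherwise `B'` and `B` would be the least pair `C'`, `C`, which `z` has merged into one part
  obtain ⟨rfl, rfl⟩ := IsMinPair.eq
    ⟨hB', hB, ⟨Y, hY, hBY⟩, hlt, hBl.trans (hmz.maxLabel_eq.trans heq'.symm)⟩ hm
  obtain ⟨a, ha⟩ := x.nonempty_of_mem_parts hm.right_mem
  obtain ⟨a', ha'⟩ := x.nonempty_of_mem_parts hm.left_mem
  have hD := eq_of_mem_parts _ hmz.right_mem union_mem_merge (hBD ha) (mem_union_right _ ha)
  have hD' := eq_of_mem_parts _ hmz.left_mem union_mem_merge (hB'D' ha') (mem_union_left _ ha')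
  exact hmz.ne (hD'.trans hD.symm)

theorem minAtomLabel_chi : MinAtomLabel (chi (n := n)) minMergeLabel where
  exists_covBy _ _ := exists_covBy_chi_eq
  le_label _ _ _ := minMergeLabel_le_chi
  eq_of_label_eq _ _ _ _ := eq_of_chi_eq
  label_lt_iff _ _ _ h hzy := by
    refine ⟨fun hlt => by_contra fun hne => ?_, fun heq => ?_⟩
    · exact (minMergeLabel_le_chi_of_ne h hzy.le hne).not_gt hlt
    · rw [heq]
      exact minMergeLabel_lt_of_chi_eq h hzy heq

end PartitionLattice

/-- the Wachs labeling `χ` is an EL-labeling of the partition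
lattice `Π_n`: every interval has a unique maximal chain with strictly increasing
label word, and that chain lexicographically precedes all other maximal chains
of the interval. -/
theorem statement3 (n : ℕ) (x y : Finpartition (Finset.univ : Finset (Fin n)))
    (h : x ≤ y) :
    ∃ L : List (Finpartition (Finset.univ : Finset (Fin n))),
      CoverChain x y L ∧ (labelWord chi L).Chain' (fun a b => a < b) ∧
      (∀ M, CoverChain x y M -> (labelWord chi M).Chain' (fun a b => a < b) -> M = L) ∧
      (∀ M, CoverChain x y M -> M ≠ L ->
        List.Lex (fun a b => a < b) (labelWord chi L) (labelWord chi M)) :=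
  minAtomLabel_chi.exists_unique_isChain_lex h
end

section
/- Let λ be the edge labeling of Π_{n,s+1} defined in the paper. If C₀ = 0̂ ⋖ C₁ ⋖ ... ⋖ C_n is a maximal chain whose label sequence is weakly decreasing, then the atom words satisfy A(C_i) ≠ A(C_{i+1}) for all i with 1 ≤ i ≤ n−1. -/
open Finset

/-- labels: `ℤ × ℤ × ℤ` with the lexicographic order -/
abbrev Lbl : Type := ℤ ×ₗ ℤ ×ₗ ℤ

def mkLbl (a b c : ℤ) : Lbl := toLex (a, toLex (b, c))

namespace VPart

variable {n s : ℕ}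

set_option maxHeartbeats 1000000 in
open scoped Classical in
/-- the `(k,i,j)` label for an edge with distinct atom words (1-based) -/
noncomputable def firstDiff (x y : VPart n s) : Lbl :=
  let D : Finset (Fin n × Fin s) :=
    Finset.univ.filter fun p => atomWord x p.2 p.1 ≠ atomWord y p.2 p.1
  if h : D.Nonempty then
    have hk : (D.image Prod.fst).Nonempty := h.image _
    let k := (D.image Prod.fst).min' hk
    have hk2 : ((D.filter fun p => p.1 = k).image Prod.snd).Nonempty := by
      obtain ⟨p, hp, hpk⟩ := Finset.mem_image.mp ((D.image Prod.fst).min'_mem hk)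
      exact ⟨p.2, Finset.mem_image.mpr ⟨p, Finset.mem_filter.mpr ⟨hp, hpk⟩, rfl⟩⟩
    let i := ((D.filter fun p => p.1 = k).image Prod.snd).min' hk2
    mkLbl ((k : ℕ) + 1) ((i : ℕ) + 1) ((atomWord y i k : ℕ) + 1)
  else mkLbl 0 0 0

/-- the maximum (1-based) of the union of the two merged parts -/
noncomputable def mergeMax (x y : VPart n s) : ℤ :=
  ((y.P.parts \ x.P.parts).sup fun B => B.sup fun t => (t : ℕ) + 1 : ℕ)

/-- the (1-based) index of an atom in the lexicographic order on atoms -/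
noncomputable def atomIndex (a : VPart n s) : ℤ :=
  (Nat.card {a' : VPart n s // a'.IsAtomic ∧ wordLe (atomWord a') (atomWord a)} : ℤ)

/-- The edge labeling `λ` of `Π_{n,s+1}` (on arbitrary pairs; only its values on
covering pairs are relevant). -/
noncomputable def lam : WithBot (VPart n s) → WithBot (VPart n s) → Lbl
  | ⊥, (y : VPart n s) => mkLbl ((n : ℤ) - 1) (s + atomIndex y) 0
  | (x : VPart n s), (y : VPart n s) =>
      if atomWord x = atomWord y then mkLbl n (mergeMax x y) 0 else firstDiff x y
  | _, _ => mkLbl 0 0 0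

end VPart

open VPart in
/-- along a decreasing maximal chain `̄0 = C₀ ⋖ ⋯ ⋖ Cₙ` of
`Π_{n,s+1}`, consecutive elements above the bottom edge have distinct atom words. -/
theorem statement9 (n s : ℕ) (c : Fin (n + 1) -> WithBot (VPart n s))
    (h0 : c 0 = ⊥) (htop : IsTop (c (Fin.last n)))
    (hcov : ∀ e : Fin n, c e.castSucc ⋖ c e.succ)
    (hdec : Antitone fun e : Fin n => lam (c e.castSucc) (c e.succ)) :
    ∀ e : Fin n, 1 ≤ (e : ℕ) ->
      ∀ X Y : VPart n s, c e.castSucc = X -> c e.succ = Y ->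
        atomWord X ≠ atomWord Y := by
  intro e he X Y hX hY hEq
  -- the edge `e` is a merge edge: its label has first coordinate `n`
  have hlamE : lam (c e.castSucc) (c e.succ) = mkLbl n (mergeMax X Y) 0 := by
    rw [hX, hY]; simp [lam, hEq]
  -- the bottom edge
  have hn0 : (0 : ℕ) < n := lt_of_le_of_lt (Nat.zero_le _) e.isLt
  set e0 : Fin n := ⟨0, hn0⟩ with he0
  have hcast0 : e0.castSucc = (0 : Fin (n + 1)) := rfl
  have hbot : c e0.castSucc = ⊥ := by rw [hcast0, h0]
  have hcov0 := hcov e0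
  rw [hbot] at hcov0
  have hne : c e0.succ ≠ ⊥ := (bot_lt_iff_ne_bot.mp hcov0.lt)
  obtain ⟨y, hy⟩ := WithBot.ne_bot_iff_exists.mp hne
  have hlam0 : lam (c e0.castSucc) (c e0.succ)
      = mkLbl ((n : ℤ) - 1) (s + atomIndex y) 0 := by
    rw [hbot, ← hy]; simp [lam]
  have hle : lam (c e.castSucc) (c e.succ) ≤ lam (c e0.castSucc) (c e0.succ) :=
    hdec (by simp [he0, Fin.le_def])
  rw [hlamE, hlam0] at hle
  rw [mkLbl, mkLbl, Prod.Lex.le_iff] at hle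
  rcases hle with h | ⟨h, -⟩ <;> simp only [ofLex_toLex] at h <;> omega
end

section
/- With the labeling λ of Π_{n,s+1}: if x ⋖ y is an edge with A(x) ≠ A(y) and λ(x ⋖ y) = (k,i,j), then the word entry satisfies w^i_k(x) > w^i_k(y) = j. -/
open Finset

/-!
For fixed `i`, the word `k ↦ wⁱₖ(x)` maps each part `B` of `x` increasingly onto the `i`-th
label of `B`; in particular it is a bijection of `[n]`. Since `x ≤ y`, `a = wⁱₖ(x)` lies in
the `i`-th label of the part `B'` of `y` containing `k`. If `a` were smaller than `wⁱₖ(y)`,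
monotonicity on `B'` would give `a = wⁱ_{k'}(y)` for some `k' < k` in `B'`; but
`wⁱ_{k'}(y) = wⁱ_{k'}(x)` by minimality of `k`, contradicting injectivity of the word of `x`.
-/

namespace Finset

variable {α : Type*} [LinearOrder α]

lemma card_filter_lt_lt_card {B : Finset α} {k : α} (hk : k ∈ B) :
    (B.filter (· < k)).card < B.card :=
  card_lt_card (filter_ssubset.2 ⟨k, hk, lt_irrefl k⟩)

lemma strictMonoOn_card_filter_lt (B : Finset α) :
    StrictMonoOn (fun k => (B.filter (· < k)).card) B := by
  intro k hk k' _ hkk'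
  refine card_lt_card ⟨fun a ha => ?_, fun h => ?_⟩
  · exact mem_filter.2 ⟨(mem_filter.1 ha).1, (mem_filter.1 ha).2.trans hkk'⟩
  simpa using (mem_filter.1 (h (mem_filter.2 ⟨hk, hkk'⟩))).2

lemma sort_getD_eq_orderEmbOfFin (L : Finset α) {c m : ℕ} (h : L.card = c) (hm : m < c)
    (d : α) : (L.sort (· ≤ ·)).getD m d = L.orderEmbOfFin h ⟨m, hm⟩ := by
  subst h
  rw [orderEmbOfFin_apply, List.getD_eq_getElem _ _ (by rwa [length_sort])]
  rfl

end Finset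

namespace VPart

variable {n s : ℕ}

lemma partOf_mem_parts (x : VPart n s) (k : Fin n) : x.partOf k ∈ x.P.parts :=
  x.P.part_mem.2 (mem_univ k)

lemma mem_partOf_self (x : VPart n s) (k : Fin n) : k ∈ x.partOf k :=
  x.P.mem_part (mem_univ k)

lemma partOf_subset_of_le {x y : VPart n s} (h : x ≤ y) (k : Fin n) :
    x.partOf k ⊆ y.partOf k := by
  obtain ⟨C, hC, hsub⟩ := h.1 (x.partOf_mem_parts k)
  show x.partOf k ⊆ y.P.part k
  rwa [y.P.part_eq_of_mem hC (hsub (x.mem_partOf_self k))]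

variable (x : VPart n s) (i : Fin s)

lemma atomWord_eq_orderEmbOfFin {B : Finset (Fin n)} (hB : B ∈ x.P.parts) {k : Fin n}
    (hk : k ∈ B) :
    x.atomWord i k = (x.w i B).orderEmbOfFin (x.card_w i B hB) ⟨_, card_filter_lt_lt_card hk⟩ := by
  have hpart : x.partOf k = B := x.P.part_eq_of_mem hB hk
  unfold atomWord
  rw [hpart, sort_getD_eq_orderEmbOfFin]

lemma atomWord_mem (k : Fin n) : x.atomWord i k ∈ x.w i (x.partOf k) := by
  rw [atomWord_eq_orderEmbOfFin x i (x.partOf_mem_parts k) (x.mem_partOf_self k)]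
  exact orderEmbOfFin_mem _ _ _

lemma strictMonoOn_atomWord {B : Finset (Fin n)} (hB : B ∈ x.P.parts) :
    StrictMonoOn (x.atomWord i) B := by
  intro k₁ h₁ k₂ h₂ h
  rw [atomWord_eq_orderEmbOfFin x i hB h₁, atomWord_eq_orderEmbOfFin x i hB h₂]
  exact (OrderEmbedding.lt_iff_lt _).2 (Fin.mk_lt_mk.2 (strictMonoOn_card_filter_lt B h₁ h₂ h))

lemma image_atomWord {B : Finset (Fin n)} (hB : B ∈ x.P.parts) :
    B.image (x.atomWord i) = x.w i B := by
  refine eq_of_subset_of_card_le (fun a ha => ?_) ?_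
  · obtain ⟨k, hk, rfl⟩ := mem_image.1 ha
    simpa [partOf, x.P.part_eq_of_mem hB hk] using x.atomWord_mem i k
  · rw [x.card_w i B hB, card_image_of_injOn (x.strictMonoOn_atomWord i hB).injOn]

lemma atomWord_injective : Function.Injective (x.atomWord i) := by
  intro k k' h
  have hpart : x.partOf k' = x.partOf k := by
    obtain ⟨B, _, huniq⟩ := x.part_w i (x.atomWord i k)
    exact (huniq _ ⟨x.partOf_mem_parts k', h ▸ x.atomWord_mem i k'⟩).trans
      (huniq _ ⟨x.partOf_mem_parts k, x.atomWord_mem i k⟩).symm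
  exact (x.strictMonoOn_atomWord i (x.partOf_mem_parts k)).injOn (x.mem_partOf_self k)
    (hpart ▸ x.mem_partOf_self k') h

theorem atomWord_lt_of_le {x y : VPart n s} (hxy : x ≤ y) {i : Fin s} {k : Fin n}
    (hne : x.atomWord i k ≠ y.atomWord i k)
    (hmin : ∀ k' < k, x.atomWord i k' = y.atomWord i k') :
    y.atomWord i k < x.atomWord i k := by
  refine lt_of_le_of_ne (not_lt.1 fun hlt => ?_) hne.symm
  have hB := y.partOf_mem_parts k
  have hmem : x.atomWord i k ∈ y.w i (y.partOf k) :=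
    hxy.2 i _ (x.partOf_mem_parts k) _ hB (partOf_subset_of_le hxy k) (x.atomWord_mem i k)
  obtain ⟨k', hk', hk'k⟩ := mem_image.1 ((y.image_atomWord i hB).symm ▸ hmem)
  have hlt' : k' < k :=
    ((y.strictMonoOn_atomWord i hB).lt_iff_lt hk' (y.mem_partOf_self k)).1 (by rwa [hk'k])
  exact hlt'.ne (x.atomWord_injective i ((hmin k' hlt').trans hk'k))

end VPart

open VPart in
theorem statement10_general (n s : ℕ) (x y : VPart n s) (hxy : x ⋖ y)
    (p : Fin n × Fin s)
    (hp : atomWord x p.2 p.1 ≠ atomWord y p.2 p.1)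
    (hmin : ∀ q : Fin n × Fin s, (q.1 < p.1 ∨ (q.1 = p.1 ∧ q.2 < p.2)) ->
      atomWord x q.2 q.1 = atomWord y q.2 q.1) :
    atomWord y p.2 p.1 < atomWord x p.2 p.1 :=
  atomWord_lt_of_le hxy.le hp fun k' hk' => hmin (k', p.2) (Or.inl hk')

open VPart in
/-- if `x ⋖ y` is an edge (above `̄0`) with `A(x) ≠ A(y)` and
`(k, i, j)` is the lexicographically first triple with `wⁱₖ(x) ≠ wⁱₖ(y) = j`
(here `p = (k, i)`), then `wⁱₖ(x) > wⁱₖ(y) = j`. -/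
theorem statement10 (n s : ℕ) (x y : VPart n s) (hxy : x ⋖ y)
    (hA : atomWord x ≠ atomWord y) (p : Fin n × Fin s)
    (hp : atomWord x p.2 p.1 ≠ atomWord y p.2 p.1)
    (hmin : ∀ q : Fin n × Fin s, (q.1 < p.1 ∨ (q.1 = p.1 ∧ q.2 < p.2)) ->
      atomWord x q.2 q.1 = atomWord y q.2 q.1) :
    atomWord y p.2 p.1 < atomWord x p.2 p.1 :=
  statement10_general n s x y hxy p hp hmin
end

section
/- Define B_1 = 1 and B_n = Σ_{α=1}^{n−1} C(n−1, α−1) · C(n−1, α) · B_α · B_{n−α} for n ≥ 2 (the number of decreasing maximal chains of Π_{n,2}). Define b_0 = 1 and b_{n+1} = Σ_{i+j=n} C(n+1, i) · C(n+1, j) · b_i · b_j for n ≥ 0 (the number of complete non-ambiguous trees with n internal vertices). Then B_n = b_{n−1} for all n ≥ 1. -/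
open Finset

-- The substitution `α = i + 1` turns the recurrence for `B n = b (n - 1)` into that for `b`.
lemma sum_Icc_shifted_eq_sum_range (b : ℕ → ℕ) (m : ℕ) :
    ∑ α ∈ Icc 1 (m + 1), (m + 1).choose (α - 1) * (m + 1).choose α * b (α - 1) * b (m + 2 - α - 1)
      = ∑ i ∈ range (m + 1), (m + 1).choose i * (m + 1).choose (m - i) * b i * b (m - i) := by
  rw [← Ico_add_one_right_eq_Icc, sum_Ico_eq_sum_range]
  refine sum_congr (by simp) fun i hi => ?_
  have hle : i ≤ m := Nat.lt_succ_iff.mp (by simpa using hi)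
  have hchoose : (m + 1).choose (1 + i) = (m + 1).choose (m - i) := by
    rw [← Nat.choose_symm (by omega : 1 + i ≤ m + 1)]
    congr 1
    omega
  rw [hchoose, show 1 + i - 1 = i by omega, show m + 2 - (1 + i) - 1 = m - i by omega]

/-- the sequence `B` counting decreasing maximal chains of `Π_{n,2}` and
the sequence `b` counting complete non-ambiguous trees, each defined by its recurrence,
satisfy `B n = b (n - 1)` for all `n ≥ 1`. -/
theorem statement15 (B b : ℕ -> ℕ)
    (hB1 : B 1 = 1)
    (hB : ∀ n, 2 ≤ n -> B n = ∑ α ∈ Finset.Icc 1 (n - 1),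
      (n - 1).choose (α - 1) * (n - 1).choose α * B α * B (n - α))
    (hb0 : b 0 = 1)
    (hb : ∀ n : ℕ, b (n + 1) = ∑ i ∈ Finset.range (n + 1),
      (n + 1).choose i * (n + 1).choose (n - i) * b i * b (n - i)) :
    ∀ n : ℕ, 1 ≤ n -> B n = b (n - 1) := by
  intro n hn
  induction n using Nat.strong_induction_on with
  | _ n ih =>
    match n, hn with
    | 1, _ => rw [hB1, hb0]
    | m + 2, _ =>
      have hBb : ∀ α ∈ Icc 1 (m + 1), (m + 1).choose (α - 1) * (m + 1).choose α * B α * B (m + 2 - α)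
          = (m + 1).choose (α - 1) * (m + 1).choose α * b (α - 1) * b (m + 2 - α - 1) := by
        intro α hα
        rw [mem_Icc] at hα
        rw [ih α (by omega) hα.1, ih (m + 2 - α) (by omega) (by omega)]
      rw [hB (m + 2) (by omega), show m + 2 - 1 = m + 1 from rfl, sum_congr rfl hBb,
        sum_Icc_shifted_eq_sum_range, ← hb]
end
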